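/- (Small-frequency eigenvalue asymptotics, case ρ+θ > 1) Assume additionally ρ + θ > 1. Then there exist ε ∈ (0,1) and functions λ₁, λ₂, λ₃, λ₄ : (0,ε) → ℂ such that for every r ∈ (0,ε) the multiset of roots (with multiplicity) of the characteristic polynomial of B(r) is {λ₁(r), λ₂(r), λ₃(r), λ₄(r)}, and as r → 0⁺: λ₁(r) − b²r^{2−2ρ} = O(r^{m}), λ₂(r) − a²r^{2−2ρ} = O(r^{m}), λ₃(r) − (r^{2ρ} − b²r^{2−2ρ}) = O(r^{m}), and λ₄(r) − (r^{2ρ} − a²r^{2−2ρ}) = O(r^{m}), where m := min(3−4ρ, 2θ). -/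

import Mathlib

noncomputable section

/-- The matrix `B₀` with rows (1,0,1,0), (0,1,0,1), (1,0,1,0), (0,1,0,1). -/
def B0 : Matrix (Fin 4) (Fin 4) ℂ :=
  !![1,0,1,0; 0,1,0,1; 1,0,1,0; 0,1,0,1]

/-- The matrix `B₁ = diag(−b, −a, b, a)`. -/
def B1 (a b : ℝ) : Matrix (Fin 4) (Fin 4) ℂ :=
  !![-(b:ℂ),0,0,0; 0,-(a:ℂ),0,0; 0,0,(b:ℂ),0; 0,0,0,(a:ℂ)]

/-- The coefficient matrix `B(r) = (1/2)(r^{2ρ}+r^{2θ})B₀ + i r B₁`. -/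
def Bmat (a b ρ θ r : ℝ) : Matrix (Fin 4) (Fin 4) ℂ :=
  (((1/2) * (r ^ (2*ρ) + r ^ (2*θ)) : ℝ) : ℂ) • B0 + (Complex.I * (r : ℂ)) • B1 a b

open Asymptotics Filter Topology

open Polynomial

/-!
`B(r)` only couples the coordinates `1 ↔ 3` and `2 ↔ 4`, so its characteristic polynomial is
`(X² - 2sX + b²r²)(X² - 2sX + a²r²)` with `s = (r^{2ρ} + r^{2θ})/2`, and its eigenvalues are
`s ± √(s² - c²r²)` for `c ∈ {a, b}`. As `ρ < 1/2`, `cr = o(r^{2ρ})`, so the square root is real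
for small `r` and the small eigenvalue is `c²r²/(s + √(s² - c²r²))`. Comparing it with
`c²r²/r^{2ρ}` leaves an error `O(c⁴r^{4-6ρ} + c²r^{2+2θ-4ρ})`, which is `O(r^{3-4ρ})` because
`θ ≥ 1/2`. The large eigenvalue is `r^{2ρ} + r^{2θ}` minus the small one.
-/

theorem charpoly_smul_B0_add_smul_B1 (a b : ℝ) (s t : ℂ) :
    (s • B0 + t • B1 a b).charpoly =
      (X ^ 2 - C (2 * s) * X - C (t ^ 2 * b ^ 2)) * (X ^ 2 - C (2 * s) * X - C (t ^ 2 * a ^ 2)) := by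
  rw [Matrix.charpoly, Matrix.det_succ_row_zero]
  simp [Fin.sum_univ_succ, Matrix.det_fin_three, Fin.succAbove, B0, B1, Matrix.charmatrix_apply,
    Matrix.diagonal_apply, map_ofNat]
  ring

theorem X_sq_sub_C_mul_X_sub_C_eq_mul {R : Type*} [CommRing R] {s D q : R}
    (h : D ^ 2 = s ^ 2 + q) :
    X ^ 2 - C (2 * s) * X - C q = (X - C (s - D)) * (X - C (s + D)) := by
  have hC : C D ^ 2 = C s ^ 2 + C q := by rw [← map_pow, h, map_add, map_pow]
  simp only [map_mul, map_sub, map_add, map_ofNat]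
  linear_combination hC

def coeffB0 (ρ θ r : ℝ) : ℝ := (1/2) * (r ^ (2*ρ) + r ^ (2*θ))

def eigenvalueMinus (c ρ θ r : ℝ) : ℝ := coeffB0 ρ θ r - √(coeffB0 ρ θ r ^ 2 - c ^ 2 * r ^ 2)

def eigenvaluePlus (c ρ θ r : ℝ) : ℝ := coeffB0 ρ θ r + √(coeffB0 ρ θ r ^ 2 - c ^ 2 * r ^ 2)

theorem roots_charpoly_Bmat {a b ρ θ r : ℝ} (ha : a ^ 2 * r ^ 2 ≤ coeffB0 ρ θ r ^ 2)
    (hb : b ^ 2 * r ^ 2 ≤ coeffB0 ρ θ r ^ 2) :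
    (Bmat a b ρ θ r).charpoly.roots =
      {(eigenvalueMinus b ρ θ r : ℂ), (eigenvalueMinus a ρ θ r : ℂ),
        (eigenvaluePlus b ρ θ r : ℂ), (eigenvaluePlus a ρ θ r : ℂ)} := by
  have hfactor : ∀ c : ℝ, c ^ 2 * r ^ 2 ≤ coeffB0 ρ θ r ^ 2 →
      X ^ 2 - C (2 * (coeffB0 ρ θ r : ℂ)) * X - C ((Complex.I * r) ^ 2 * (c : ℂ) ^ 2) =
        (X - C (eigenvalueMinus c ρ θ r : ℂ)) * (X - C (eigenvaluePlus c ρ θ r : ℂ)) := by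
    intro c hc
    have hD := Real.sq_sqrt (sub_nonneg.2 hc)
    push_cast [eigenvalueMinus, eigenvaluePlus]
    apply X_sq_sub_C_mul_X_sub_C_eq_mul
    have hDC := congrArg (fun x : ℝ => (x : ℂ)) hD
    push_cast at hDC
    rw [hDC, mul_pow, Complex.I_sq]
    ring
  rw [Bmat, ← coeffB0, charpoly_smul_B0_add_smul_B1, hfactor a ha, hfactor b hb,
    ← roots_multiset_prod_X_sub_C {(eigenvalueMinus b ρ θ r : ℂ), _, _, _}]
  simp only [Multiset.insert_eq_cons, Multiset.map_cons, Multiset.prod_cons,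
    Multiset.map_singleton, Multiset.prod_singleton]
  ring_nf

section Eigenvalues

variable {ρ θ : ℝ}

theorem abs_sub_sub_div_le {t u q s D : ℝ} (ht : 0 < t) (hu : 0 ≤ u) (hq : 0 ≤ q)
    (hs : 2 * s = t + u) (hD0 : 0 ≤ D) (hD : D ^ 2 = s ^ 2 - q) :
    |s - D - q / t| ≤ 4 * q ^ 2 / t ^ 3 + 2 * q * u / t ^ 2 := by
  have hsD : t / 2 ≤ s + D := by linarith
  have hsub : 0 ≤ s - D ∧ s - D ≤ 2 * q / t := by
    rw [le_div_iff₀ ht]; constructor <;> nlinarith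
  have hE : s - D - q / t = q * (s - D - u) / (t * (s + D)) := by
    have : s + D ≠ 0 := by linarith
    field_simp
    linear_combination (-t) * hD - q * hs
  rw [hE, abs_div, abs_mul, abs_of_nonneg hq, abs_of_pos (by nlinarith : 0 < t * (s + D))]
  calc q * |s - D - u| / (t * (s + D)) ≤ q * (2 * q / t + u) / (t * (t / 2)) := by
        gcongr
        exact abs_le.2 ⟨by linarith, by linarith⟩
    _ = 4 * q ^ 2 / t ^ 3 + 2 * q * u / t ^ 2 := by field_simp; ring

theorem abs_eigenvalueMinus_sub_le (c : ℝ) (hρ : ρ ≤ 1/2) (hθ : 1/2 ≤ θ) {r : ℝ} (hr : 0 < r)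
    (hr1 : r ≤ 1) (hc : c ^ 2 * r ^ 2 ≤ coeffB0 ρ θ r ^ 2) :
    |eigenvalueMinus c ρ θ r - c ^ 2 * r ^ (2 - 2*ρ)| ≤
      (4 * c ^ 4 + 2 * c ^ 2) * r ^ min (3 - 4*ρ) (2*θ) := by
  have ht : 0 < r ^ (2*ρ) := Real.rpow_pos_of_pos hr _
  have h := abs_sub_sub_div_le ht (Real.rpow_nonneg hr.le (2*θ)) (by positivity)
    (s := coeffB0 ρ θ r) (by rw [coeffB0]; ring) (Real.sqrt_nonneg _)
    (Real.sq_sqrt (sub_nonneg.2 hc))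
  have e₁ : r ^ (2 - 2*ρ) = r ^ 2 / r ^ (2*ρ) := by
    rw [Real.rpow_sub hr]; norm_num
  have e₂ : r ^ (4 - 6*ρ) = r ^ 4 / (r ^ (2*ρ)) ^ 3 := by
    rw [Real.rpow_sub hr, ← Real.rpow_mul_natCast hr.le]; norm_num; ring_nf
  have e₃ : r ^ (2 + 2*θ - 4*ρ) = r ^ 2 * r ^ (2*θ) / (r ^ (2*ρ)) ^ 2 := by
    rw [Real.rpow_sub hr, Real.rpow_add hr, ← Real.rpow_mul_natCast hr.le]; norm_num; ring_nf
  have k₂ : r ^ (4 - 6*ρ) ≤ r ^ min (3 - 4*ρ) (2*θ) :=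
    Real.rpow_le_rpow_of_exponent_ge hr hr1 ((min_le_left _ _).trans (by linarith))
  have k₃ : r ^ (2 + 2*θ - 4*ρ) ≤ r ^ min (3 - 4*ρ) (2*θ) :=
    Real.rpow_le_rpow_of_exponent_ge hr hr1 ((min_le_left _ _).trans (by linarith))
  calc |eigenvalueMinus c ρ θ r - c ^ 2 * r ^ (2 - 2*ρ)|
      _ = |coeffB0 ρ θ r - √(coeffB0 ρ θ r ^ 2 - c ^ 2 * r ^ 2) - c ^ 2 * r ^ 2 / r ^ (2*ρ)| := by
        rw [eigenvalueMinus, e₁, mul_div_assoc]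
      _ ≤ 4 * (c ^ 2 * r ^ 2) ^ 2 / (r ^ (2*ρ)) ^ 3 +
            2 * (c ^ 2 * r ^ 2) * r ^ (2*θ) / (r ^ (2*ρ)) ^ 2 := h
      _ = 4 * c ^ 4 * r ^ (4 - 6*ρ) + 2 * c ^ 2 * r ^ (2 + 2*θ - 4*ρ) := by
        rw [e₂, e₃]; ring
      _ ≤ (4 * c ^ 4 + 2 * c ^ 2) * r ^ min (3 - 4*ρ) (2*θ) := by
        rw [add_mul]; gcongr

theorem abs_eigenvaluePlus_sub_le (c : ℝ) (hρ : ρ ≤ 1/2) (hθ : 1/2 ≤ θ) {r : ℝ} (hr : 0 < r)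
    (hr1 : r ≤ 1) (hc : c ^ 2 * r ^ 2 ≤ coeffB0 ρ θ r ^ 2) :
    |eigenvaluePlus c ρ θ r - (r ^ (2*ρ) - c ^ 2 * r ^ (2 - 2*ρ))| ≤
      (1 + (4 * c ^ 4 + 2 * c ^ 2)) * r ^ min (3 - 4*ρ) (2*θ) := by
  have hsum : eigenvaluePlus c ρ θ r - (r ^ (2*ρ) - c ^ 2 * r ^ (2 - 2*ρ)) =
      r ^ (2*θ) - (eigenvalueMinus c ρ θ r - c ^ 2 * r ^ (2 - 2*ρ)) := by
    simp only [eigenvaluePlus, eigenvalueMinus, coeffB0]; ring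
  have hu : r ^ (2*θ) ≤ r ^ min (3 - 4*ρ) (2*θ) :=
    Real.rpow_le_rpow_of_exponent_ge hr hr1 (min_le_right _ _)
  rw [hsum]
  calc _ ≤ |r ^ (2*θ)| + |eigenvalueMinus c ρ θ r - c ^ 2 * r ^ (2 - 2*ρ)| := abs_sub _ _
    _ ≤ _ := by
      rw [abs_of_nonneg (Real.rpow_nonneg hr.le _)]
      linarith [abs_eigenvalueMinus_sub_le c hρ hθ hr hr1 hc]

theorem eventually_sq_mul_sq_le_coeffB0_sq (c : ℝ) (hρ : ρ < 1/2) :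
    ∀ᶠ r in 𝓝[>] 0, c ^ 2 * r ^ 2 ≤ coeffB0 ρ θ r ^ 2 := by
  have hlim : Tendsto (fun r : ℝ => 4 * c ^ 2 * r ^ (2 - 4*ρ)) (𝓝[>] 0) (𝓝 0) := by
    have := (Real.continuousAt_rpow_const 0 (2 - 4*ρ) (Or.inr (by linarith))).tendsto
    simpa [Real.zero_rpow (by linarith : (2 - 4*ρ) ≠ 0)] using
      (this.mono_left nhdsWithin_le_nhds).const_mul (4 * c ^ 2)
  filter_upwards [hlim.eventually_lt_const one_pos, self_mem_nhdsWithin] with r hlt (hr : 0 < r)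
  have e : r ^ 2 = r ^ (2 - 4*ρ) * (r ^ (2*ρ)) ^ 2 := by
    rw [← Real.rpow_mul_natCast hr.le, ← Real.rpow_add hr]
    ring_nf
    exact (Real.rpow_two r).symm
  have hs : r ^ (2*ρ) / 2 ≤ coeffB0 ρ θ r := by
    rw [coeffB0]; linarith [Real.rpow_nonneg hr.le (2*θ)]
  calc c ^ 2 * r ^ 2 = (4 * c ^ 2 * r ^ (2 - 4*ρ)) * (r ^ (2*ρ) / 2) ^ 2 := by rw [e]; ring
    _ ≤ 1 * (r ^ (2*ρ) / 2) ^ 2 := by gcongr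
    _ ≤ coeffB0 ρ θ r ^ 2 := by rw [one_mul]; gcongr

theorem isBigO_eigenvalueMinus_sub (c : ℝ) (hρ : ρ < 1/2) (hθ : 1/2 ≤ θ) :
    (fun r : ℝ => ((eigenvalueMinus c ρ θ r : ℝ) : ℂ) - ((c ^ 2 * r ^ (2 - 2*ρ) : ℝ) : ℂ))
      =O[𝓝[>] 0] (fun r : ℝ => r ^ min (3 - 4*ρ) (2*θ)) := by
  simp_rw [← Complex.ofReal_sub]
  refine Complex.isBigO_ofReal_left.2 (IsBigO.of_bound (4 * c ^ 4 + 2 * c ^ 2) ?_)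
  filter_upwards [eventually_sq_mul_sq_le_coeffB0_sq c hρ, Ioo_mem_nhdsGT one_pos]
    with r hc ⟨hr, hr1⟩
  rw [Real.norm_eq_abs, Real.norm_of_nonneg (Real.rpow_nonneg hr.le _)]
  exact abs_eigenvalueMinus_sub_le c hρ.le hθ hr hr1.le hc

theorem isBigO_eigenvaluePlus_sub (c : ℝ) (hρ : ρ < 1/2) (hθ : 1/2 ≤ θ) :
    (fun r : ℝ => ((eigenvaluePlus c ρ θ r : ℝ) : ℂ) -
        ((r ^ (2*ρ) - c ^ 2 * r ^ (2 - 2*ρ) : ℝ) : ℂ))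
      =O[𝓝[>] 0] (fun r : ℝ => r ^ min (3 - 4*ρ) (2*θ)) := by
  simp_rw [← Complex.ofReal_sub]
  refine Complex.isBigO_ofReal_left.2 (IsBigO.of_bound (1 + (4 * c ^ 4 + 2 * c ^ 2)) ?_)
  filter_upwards [eventually_sq_mul_sq_le_coeffB0_sq c hρ, Ioo_mem_nhdsGT one_pos]
    with r hc ⟨hr, hr1⟩
  rw [Real.norm_eq_abs, Real.norm_of_nonneg (Real.rpow_nonneg hr.le _)]
  exact abs_eigenvaluePlus_sub_le c hρ.le hθ hr hr1.le hc

end Eigenvalues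

theorem stmt6_general (a b ρ θ : ℝ) (hρ : ρ < 1/2) (hθ : 1/2 < θ) :
    ∃ ε : ℝ, 0 < ε ∧ ε < 1 ∧ ∃ l₁ l₂ l₃ l₄ : ℝ → ℂ,
      (∀ r : ℝ, 0 < r → r < ε →
        (Bmat a b ρ θ r).charpoly.roots = {l₁ r, l₂ r, l₃ r, l₄ r}) ∧
      (fun r : ℝ => l₁ r - ((b^2 * r ^ (2 - 2*ρ) : ℝ) : ℂ))
        =O[𝓝[>] (0:ℝ)] (fun r : ℝ => r ^ (min (3 - 4*ρ) (2*θ))) ∧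
      (fun r : ℝ => l₂ r - ((a^2 * r ^ (2 - 2*ρ) : ℝ) : ℂ))
        =O[𝓝[>] (0:ℝ)] (fun r : ℝ => r ^ (min (3 - 4*ρ) (2*θ))) ∧
      (fun r : ℝ => l₃ r - ((r ^ (2*ρ) - b^2 * r ^ (2 - 2*ρ) : ℝ) : ℂ))
        =O[𝓝[>] (0:ℝ)] (fun r : ℝ => r ^ (min (3 - 4*ρ) (2*θ))) ∧
      (fun r : ℝ => l₄ r - ((r ^ (2*ρ) - a^2 * r ^ (2 - 2*ρ) : ℝ) : ℂ))
        =O[𝓝[>] (0:ℝ)] (fun r : ℝ => r ^ (min (3 - 4*ρ) (2*θ))) := by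
  obtain ⟨δ, hδ, hsmall⟩ := mem_nhdsGT_iff_exists_Ioo_subset.1
    ((eventually_sq_mul_sq_le_coeffB0_sq (θ := θ) a hρ).and
      (eventually_sq_mul_sq_le_coeffB0_sq b hρ))
  refine ⟨min δ (1/2), lt_min hδ (by norm_num), (min_le_right _ _).trans_lt (by norm_num),
    fun r => eigenvalueMinus b ρ θ r, fun r => eigenvalueMinus a ρ θ r,
    fun r => eigenvaluePlus b ρ θ r, fun r => eigenvaluePlus a ρ θ r, fun r hr hrε => ?_,
    isBigO_eigenvalueMinus_sub b hρ hθ.le, isBigO_eigenvalueMinus_sub a hρ hθ.le,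
    isBigO_eigenvaluePlus_sub b hρ hθ.le, isBigO_eigenvaluePlus_sub a hρ hθ.le⟩
  obtain ⟨ha, hb⟩ := hsmall ⟨hr, hrε.trans_le (min_le_left _ _)⟩
  exact roots_charpoly_Bmat ha hb

/-- Small-frequency eigenvalue asymptotics in the case `ρ + θ > 1`,
with remainder exponent `m = min(3−4ρ, 2θ)`. -/
theorem stmt6 (a b ρ θ : ℝ) (ha : 0 < a) (hab : a < b)
    (hρ0 : 0 ≤ ρ) (hρ : ρ < 1/2) (hθ : 1/2 < θ) (hθ1 : θ ≤ 1)
    (hsum : 1 < ρ + θ) :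
    ∃ ε : ℝ, 0 < ε ∧ ε < 1 ∧ ∃ l₁ l₂ l₃ l₄ : ℝ → ℂ,
      (∀ r : ℝ, 0 < r → r < ε →
        (Bmat a b ρ θ r).charpoly.roots = {l₁ r, l₂ r, l₃ r, l₄ r}) ∧
      (fun r : ℝ => l₁ r - ((b^2 * r ^ (2 - 2*ρ) : ℝ) : ℂ))
        =O[𝓝[>] (0:ℝ)] (fun r : ℝ => r ^ (min (3 - 4*ρ) (2*θ))) ∧
      (fun r : ℝ => l₂ r - ((a^2 * r ^ (2 - 2*ρ) : ℝ) : ℂ))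
        =O[𝓝[>] (0:ℝ)] (fun r : ℝ => r ^ (min (3 - 4*ρ) (2*θ))) ∧
      (fun r : ℝ => l₃ r - ((r ^ (2*ρ) - b^2 * r ^ (2 - 2*ρ) : ℝ) : ℂ))
        =O[𝓝[>] (0:ℝ)] (fun r : ℝ => r ^ (min (3 - 4*ρ) (2*θ))) ∧
      (fun r : ℝ => l₄ r - ((r ^ (2*ρ) - a^2 * r ^ (2 - 2*ρ) : ℝ) : ℂ))
        =O[𝓝[>] (0:ℝ)] (fun r : ℝ => r ^ (min (3 - 4*ρ) (2*θ))) :=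
  stmt6_general a b ρ θ hρ hθ

end
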